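/- Let Ω ⊂ ℝ^d be compact, X¹,…,X^N ∈ Ω, and T^{(N)}_ε f(x) = Σ_j k^{(N)}_ε(x,X^j) f(X^j)/Σ_j k^{(N)}_ε(x,X^j) the empirical diffusion map operator. Then for every f with ‖f‖_∞ ≤ 1 and all x, x' ∈ Ω: (a) |T^{(N)}_ε f(x)| ≤ 1, and (b) |T^{(N)}_ε f(x) - T^{(N)}_ε f(x')| ≤ (L/ε)|x - x'| e^{(L/(2ε))|x-x'|}, where L depends only on the diameter of Ω. Hence the family {T^{(N)}_ε f : ‖f‖_∞ ≤ 1, N ∈ ℕ} is uniformly bounded and equicontinuous. -/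

import Mathlib

/-!
After cancelling the factor `√(Σ_j g_ε(x, X^j))`, which does not depend on `j`,
`T^{(N)}_ε f(x)` is the mean of the values `f(X^j)` weighted by
`g_ε(x, X^j) / √(Σ_i g_ε(X^j, X^i)) > 0`, so it is bounded by `‖f‖_∞`. Moving `x` to `x'`
changes each weight by a factor at most `e^t`, `t = (L / (2ε)) |x - x'|`, because
`|x' - y|² - |x - y|² ≤ 2L |x - x'|` on `Ω`. Two weighted means whose weights are
comparable up to the factor `e^t` differ by at most `2 (e^t - 1) ≤ 2t e^t`.
-/

open Finset

noncomputable section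

variable {d : ℕ}

/-- The Gaussian kernel `g_ε(x,y) = e^{-|x-y|²/(4ε)}`. -/
def gker (ε : ℝ) (x y : EuclideanSpace ℝ (Fin d)) : ℝ :=
  Real.exp (-‖x - y‖ ^ 2 / (4 * ε))

/-- The symmetrically normalized empirical kernel `k^{(N)}_ε`. -/
def kN {N : ℕ} (ε : ℝ) (X : Fin N → EuclideanSpace ℝ (Fin d))
    (x y : EuclideanSpace ℝ (Fin d)) : ℝ :=
  gker ε x y /
    (Real.sqrt (∑ j, gker ε x (X j)) * Real.sqrt (∑ j, gker ε y (X j)))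

/-- The empirical diffusion map operator
`T^{(N)}_ε f(x) = Σ_j k^{(N)}_ε(x,X^j) f(X^j) / Σ_j k^{(N)}_ε(x,X^j)`. -/
def TNop {N : ℕ} (ε : ℝ) (X : Fin N → EuclideanSpace ℝ (Fin d))
    (f : EuclideanSpace ℝ (Fin d) → ℝ) (x : EuclideanSpace ℝ (Fin d)) : ℝ :=
  (∑ j, kN ε X x (X j) * f (X j)) / (∑ j, kN ε X x (X j))

section WeightedMean

variable {ι : Type*} {s : Finset ι} {a b v : ι → ℝ}

lemma abs_centerMass_le {M : ℝ} (ha : ∀ i ∈ s, 0 ≤ a i) (hsum : 0 < ∑ i ∈ s, a i)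
    (hv : ∀ i ∈ s, |v i| ≤ M) : |s.centerMass a v| ≤ M :=
  abs_le.2 <| (convex_Icc (-M) M).centerMass_mem ha hsum fun i hi => abs_le.1 (hv i hi)

/-- Centring at `c = s.centerMass b v` gives `Σ b (v - c) = 0`, so the difference of the two
means is `(Σ a)⁻¹ Σ (a - b) (v - c)` and only the discrepancy of the weights contributes. -/
lemma abs_centerMass_sub_centerMass_le {M δ : ℝ}
    (hsa : 0 < ∑ i ∈ s, a i) (hb : ∀ i ∈ s, 0 ≤ b i) (hsb : 0 < ∑ i ∈ s, b i)
    (hab : ∀ i ∈ s, |a i - b i| ≤ δ * a i) (hv : ∀ i ∈ s, |v i| ≤ M) :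
    |s.centerMass a v - s.centerMass b v| ≤ 2 * M * δ := by
  set c := s.centerMass b v
  have hc : |c| ≤ M := abs_centerMass_le hb hsb hv
  have hb_centred : ∑ i ∈ s, b i * (v i - c) = 0 := by
    simp only [c, centerMass, smul_eq_mul, mul_sub, sum_sub_distrib, ← sum_mul]
    field_simp
    ring
  have hdiff : s.centerMass a v - c = (∑ i ∈ s, (a i - b i) * (v i - c)) / ∑ i ∈ s, a i := by
    have hnum : ∑ i ∈ s, (a i - b i) * (v i - c) = ∑ i ∈ s, a i * v i - (∑ i ∈ s, a i) * c :=
      calc ∑ i ∈ s, (a i - b i) * (v i - c)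
          = ∑ i ∈ s, a i * (v i - c) - ∑ i ∈ s, b i * (v i - c) := by
            simp only [sub_mul, sum_sub_distrib]
        _ = ∑ i ∈ s, a i * v i - (∑ i ∈ s, a i) * c := by
            rw [hb_centred, sub_zero]
            simp only [mul_sub, sum_sub_distrib, sum_mul]
    simp only [hnum, centerMass, smul_eq_mul]
    field_simp
  rw [hdiff, abs_div, abs_of_pos hsa, div_le_iff₀ hsa, mul_sum]
  refine (abs_sum_le_sum_abs _ _).trans (sum_le_sum fun i hi => ?_)
  have hvc : |v i - c| ≤ 2 * M := (abs_sub _ _).trans (by linarith [hv i hi])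
  calc |(a i - b i) * (v i - c)| = |a i - b i| * |v i - c| := abs_mul _ _
    _ ≤ δ * a i * (2 * M) :=
      mul_le_mul (hab i hi) hvc (abs_nonneg _) ((abs_nonneg _).trans (hab i hi))
    _ = 2 * M * δ * a i := by ring

end WeightedMean

/-- From `b ≥ a / R` one gets `a - b ≤ (1 - 1/R) a ≤ (R - 1) a`, the last step being
`(R - 1)² ≥ 0`. -/
lemma abs_sub_le_of_le_mul_of_le_mul {a b R : ℝ} (ha : 0 < a) (hb : 0 < b)
    (hab : a ≤ R * b) (hba : b ≤ R * a) : |a - b| ≤ (R - 1) * a := by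
  rw [abs_le]
  constructor
  · linarith
  · nlinarith [mul_nonneg (sq_nonneg (R - 1)) hb.le]

lemma Real.exp_sub_one_le_mul_exp (t : ℝ) : Real.exp t - 1 ≤ t * Real.exp t := by
  have h := Real.one_sub_le_exp_neg t
  have hmul : Real.exp (-t) * Real.exp t = 1 := by rw [← Real.exp_add, neg_add_cancel, Real.exp_zero]
  nlinarith [Real.exp_pos t]

/-- `|x' - y|² - |x - y|² = (|x' - y| - |x - y|)(|x' - y| + |x - y|) ≤ |x - x'| · 2D`. -/
lemma gker_le_exp_mul_gker {ε D : ℝ} (hε : 0 < ε) {x x' y : EuclideanSpace ℝ (Fin d)}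
    (hx : ‖x - y‖ ≤ D) (hx' : ‖x' - y‖ ≤ D) :
    gker ε x y ≤ Real.exp (D / (2 * ε) * ‖x - x'‖) * gker ε x' y := by
  have htri : ‖x' - y‖ ≤ ‖x - x'‖ + ‖x - y‖ := by
    rw [norm_sub_rev x x']
    exact norm_sub_le_norm_sub_add_norm_sub x' x y
  have hsq : ‖x' - y‖ ^ 2 - ‖x - y‖ ^ 2 ≤ 2 * D * ‖x - x'‖ := by
    nlinarith [norm_nonneg (x' - y), norm_nonneg (x - y), norm_nonneg (x - x')]
  rw [gker, gker, ← Real.exp_add, Real.exp_le_exp]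
  have h4ε : D / (2 * ε) * ‖x - x'‖ = 2 * D * ‖x - x'‖ / (4 * ε) := by
    field_simp
    ring
  rw [h4ε, ← add_div, div_le_div_iff_of_pos_right (by positivity)]
  linarith

/-- The weight of `X j` in `TNop ε X f x` once the factor `√(Σ_j g_ε(x, X^j))` common to
numerator and denominator is cancelled. -/
def TNweight {N : ℕ} (ε : ℝ) (X : Fin N → EuclideanSpace ℝ (Fin d))
    (x : EuclideanSpace ℝ (Fin d)) (j : Fin N) : ℝ :=
  gker ε x (X j) / Real.sqrt (∑ i, gker ε (X j) (X i))

section TNweight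

variable {N : ℕ} [Nonempty (Fin N)] {ε : ℝ} {X : Fin N → EuclideanSpace ℝ (Fin d)}

lemma sqrt_sum_gker_pos (x : EuclideanSpace ℝ (Fin d)) :
    0 < Real.sqrt (∑ i, gker ε x (X i)) :=
  Real.sqrt_pos.2 <| sum_pos (fun _ _ => Real.exp_pos _) univ_nonempty

lemma TNweight_pos (x : EuclideanSpace ℝ (Fin d)) (j : Fin N) : 0 < TNweight ε X x j :=
  div_pos (Real.exp_pos _) (sqrt_sum_gker_pos _)

lemma sum_TNweight_pos (x : EuclideanSpace ℝ (Fin d)) : 0 < ∑ j, TNweight ε X x j :=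
  sum_pos (fun j _ => TNweight_pos x j) univ_nonempty

lemma TNop_eq_centerMass (f : EuclideanSpace ℝ (Fin d) → ℝ) (x : EuclideanSpace ℝ (Fin d)) :
    TNop ε X f x = univ.centerMass (TNweight ε X x) (f ∘ X) := by
  have hkN : (fun j => kN ε X x (X j)) = (Real.sqrt (∑ i, gker ε x (X i)))⁻¹ • TNweight ε X x := by
    ext j
    simp only [kN, TNweight, Pi.smul_apply, smul_eq_mul]
    field_simp
  rw [← centerMass_smul_left (hc := inv_ne_zero (sqrt_sum_gker_pos (X := X) x).ne'), ← hkN]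
  simp only [TNop, centerMass, smul_eq_mul, Function.comp_apply, div_eq_inv_mul]

lemma TNweight_le_exp_mul {Ω : Set (EuclideanSpace ℝ (Fin d))} (hΩ : Bornology.IsBounded Ω)
    (hε : 0 < ε) (hX : ∀ i, X i ∈ Ω) {x x' : EuclideanSpace ℝ (Fin d)} (hx : x ∈ Ω)
    (hx' : x' ∈ Ω) (j : Fin N) :
    TNweight ε X x j ≤ Real.exp (Metric.diam Ω / (2 * ε) * ‖x - x'‖) * TNweight ε X x' j := by
  have hdiam {z : EuclideanSpace ℝ (Fin d)} (hz : z ∈ Ω) : ‖z - X j‖ ≤ Metric.diam Ω := by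
    rw [← dist_eq_norm]
    exact Metric.dist_le_diam_of_mem hΩ hz (hX j)
  rw [TNweight, TNweight, ← mul_div_assoc]
  exact div_le_div_of_nonneg_right (gker_le_exp_mul_gker hε (hdiam hx) (hdiam hx'))
    (sqrt_sum_gker_pos _).le

end TNweight

/-- on a compact set `Ω` the empirical diffusion map operators are
uniformly bounded and equicontinuous: for every `f` with `‖f‖_∞ ≤ 1`,
(a) `|T^{(N)}_ε f(x)| ≤ 1` and (b)
`|T^{(N)}_ε f(x) - T^{(N)}_ε f(x')| ≤ (L/ε)|x-x'| e^{(L/(2ε))|x-x'|}`,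
where `L` is the diameter of `Ω`. -/
theorem empirical_operator_uniformly_bounded_equicontinuous
    (Ω : Set (EuclideanSpace ℝ (Fin d))) (hΩ : IsCompact Ω)
    (ε : ℝ) (hε : 0 < ε) (L : ℝ) (hL : L = Metric.diam Ω) :
    ∀ (N : ℕ), 0 < N → ∀ X : Fin N → EuclideanSpace ℝ (Fin d), (∀ i, X i ∈ Ω) →
      ∀ f : EuclideanSpace ℝ (Fin d) → ℝ, (∀ y, |f y| ≤ 1) →
        ∀ x ∈ Ω, |TNop ε X f x| ≤ 1 ∧
          ∀ x' ∈ Ω, |TNop ε X f x - TNop ε X f x'|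
            ≤ (L / ε) * ‖x - x'‖ * Real.exp ((L / (2 * ε)) * ‖x - x'‖) := by
  intro N hN X hX f hf x hx
  have : Nonempty (Fin N) := ⟨⟨0, hN⟩⟩
  have hpos (z) : ∀ j ∈ univ, 0 ≤ TNweight ε X z j := fun j _ => (TNweight_pos z j).le
  refine ⟨?_, fun x' hx' => ?_⟩
  · rw [TNop_eq_centerMass]
    exact abs_centerMass_le (hpos x) (sum_TNweight_pos x) fun j _ => hf (X j)
  subst hL
  set t := Metric.diam Ω / (2 * ε) * ‖x - x'‖
  have hcomp (j : Fin N) (_ : j ∈ univ) :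
      |TNweight ε X x j - TNweight ε X x' j| ≤ (Real.exp t - 1) * TNweight ε X x j := by
    refine abs_sub_le_of_le_mul_of_le_mul (TNweight_pos x j) (TNweight_pos x' j) ?_ ?_
    · exact TNweight_le_exp_mul hΩ.isBounded hε hX hx hx' j
    · have h := TNweight_le_exp_mul hΩ.isBounded hε hX hx' hx j
      rwa [norm_sub_rev x'] at h
  rw [TNop_eq_centerMass, TNop_eq_centerMass]
  calc _ ≤ 2 * 1 * (Real.exp t - 1) := abs_centerMass_sub_centerMass_le
        (sum_TNweight_pos x) (hpos x') (sum_TNweight_pos x') hcomp fun j _ => hf (X j)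
    _ ≤ 2 * (t * Real.exp t) := by linarith [Real.exp_sub_one_le_mul_exp t]
    _ = _ := by
      simp only [t]
      field_simp

end
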